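/- Let γ₁, γ₂ : [0,1] → ℝ³ be C¹ embeddings (injective, with nowhere-vanishing derivative) such that γ₁(0) = γ₂(0) and γ₁(1) = γ₂(1). Then there exist λ ≥ 1 and a bijection Φ : Cone(γ₁) → Cone(γ₂) such that λ⁻¹·‖p−q‖ ≤ ‖Φ(p)−Φ(q)‖ ≤ λ·‖p−q‖ for all p, q ∈ Cone(γ₁), Φ preserves the last coordinate (Φ maps Cone(γ₁) ∩ {t = s} onto Cone(γ₂) ∩ {t = s} for every s ∈ [0,1]), and Φ fixes the two boundary rays: Φ(s·γ₁(0), s) = (s·γ₂(0), s) and Φ(s·γ₁(1), s) = (s·γ₂(1), s) for all s ∈ [0,1]. -/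

import Mathlib

open Set Metric

noncomputable section

/-- The point `(v, s) ∈ ℝ³ × ℝ = ℝ⁴`. -/
def mk4 (v : EuclideanSpace ℝ (Fin 3)) (s : ℝ) : EuclideanSpace ℝ (Fin 4) :=
  (WithLp.equiv 2 (Fin 4 → ℝ)).symm ![v 0, v 1, v 2, s]

/-- The straight cone over a curve `γ : [0,1] → ℝ³` placed in the hyperplane `{t = 1}` of
`ℝ⁴`: `Cone(γ) = {(s·γ(u), s) : s ∈ [0,1], u ∈ [0,1]}`. -/
def ConeOver (γ : ℝ → EuclideanSpace ℝ (Fin 3)) : Set (EuclideanSpace ℝ (Fin 4)) :=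
  {p | ∃ s ∈ Set.Icc (0 : ℝ) 1, ∃ u ∈ Set.Icc (0 : ℝ) 1, p = mk4 (s • γ u) s}

/-- `γ` is a `C¹` embedding of `[0,1]`: continuously differentiable, injective, with
nowhere-vanishing derivative. -/
def IsC1Embedding (γ : ℝ → EuclideanSpace ℝ (Fin 3)) : Prop :=
  ContDiffOn ℝ 1 γ (Set.Icc 0 1) ∧ Set.InjOn γ (Set.Icc 0 1) ∧
    ∀ u ∈ Set.Icc (0 : ℝ) 1, derivWithin γ (Set.Icc 0 1) u ≠ 0

/-! A `C¹` embedding of a compact interval is bi-Lipschitz onto its image: the upper bound is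
the mean value inequality, the lower bound holds near the diagonal because the derivative is
uniformly continuous and bounded away from `0`, and away from the diagonal by compactness and
injectivity. Hence `‖γ₂ u - γ₂ v‖ ≤ L * ‖γ₁ u - γ₁ v‖` and vice versa, and splitting
`s • γ₂ u - t • γ₂ v = s • (γ₂ u - γ₂ v) + (s - t) • γ₂ v` shows that the cone map
`(s • γ₁ u, s) ↦ (s • γ₂ u, s)` is Lipschitz in both directions, with constants depending only on
`L` and the sizes of the curves. The map is well defined because both parametrisations collapse
exactly `{0} × [0,1]`, to the apex. -/

lemma IsCompact.exists_pos_le_dist_of_le_dist {X Y : Type*} [PseudoMetricSpace X]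
    [MetricSpace Y] {s : Set X} (hs : IsCompact s) {f : X → Y} (hf : ContinuousOn f s)
    (hinj : InjOn f s) {δ : ℝ} (hδ : 0 < δ) :
    ∃ m > 0, ∀ x ∈ s, ∀ y ∈ s, δ ≤ dist x y → m ≤ dist (f x) (f y) := by
  have hK : IsCompact (s ×ˢ s ∩ {p | δ ≤ dist p.1 p.2}) :=
    (hs.prod hs).inter_right (isClosed_le continuous_const continuous_dist)
  obtain ⟨m, hm, hle⟩ := hK.exists_forall_le' (a := 0)
    (f := fun p : X × X => dist (f p.1) (f p.2))
    ((continuous_dist.comp_continuousOn (hf.prodMap hf)).mono inter_subset_left)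
    fun p ⟨⟨hp₁, hp₂⟩, hp⟩ => dist_pos.2 fun h => by
      have : δ ≤ dist p.1 p.2 := hp
      rw [hinj hp₁ hp₂ h, dist_self] at this; linarith
  exact ⟨m, hm, fun x hx y hy hxy => hle (x, y) ⟨⟨hx, hy⟩, hxy⟩⟩

section

variable {E : Type*} [NormedAddCommGroup E] [NormedSpace ℝ E] {γ : ℝ → E} {a b : ℝ}

lemma ContDiffOn.exists_pos_mul_abs_sub_le_norm_sub_of_abs_sub_lt (hab : a < b)
    (hγ : ContDiffOn ℝ 1 γ (Icc a b)) (hγ' : ∀ u ∈ Icc a b, derivWithin γ (Icc a b) u ≠ 0) :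
    ∃ δ > 0, ∃ c > 0, ∀ u ∈ Icc a b, ∀ v ∈ Icc a b, |u - v| < δ → c * |u - v| ≤ ‖γ u - γ v‖ := by
  set D := derivWithin γ (Icc a b)
  have hD : ContinuousOn D (Icc a b) := hγ.continuousOn_derivWithin (uniqueDiffOn_Icc hab) le_rfl
  obtain ⟨x₀, hx₀, hmin⟩ := isCompact_Icc.exists_isMinOn (nonempty_Icc.2 hab.le) hD.norm
  have hc₀ : 0 < ‖D x₀‖ := norm_pos_iff.2 (hγ' x₀ hx₀)
  obtain ⟨δ, hδ, hDclose⟩ := uniformContinuousOn_iff.mp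
    (isCompact_Icc.uniformContinuousOn_of_continuous hD) _ (half_pos hc₀)
  refine ⟨δ, hδ, ‖D x₀‖ / 2, half_pos hc₀, fun u hu v hv huv => ?_⟩
  have hsub : uIcc v u ⊆ Icc a b := uIcc_subset_Icc hv hu
  have happrox : ‖γ u - γ v - (u - v) • D v‖ ≤ ‖D x₀‖ / 2 * |u - v| := by
    have hderiv : ∀ x ∈ uIcc v u,
        HasDerivWithinAt (fun z => γ z - z • D v) (D x - D v) (uIcc v u) x :=
      fun x hx => ((hγ.differentiableOn one_ne_zero x (hsub hx)).hasDerivWithinAt.mono hsub).sub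
        (by simpa using (hasDerivWithinAt_id x _).smul_const (D v))
    have hbound : ∀ x ∈ uIcc v u, ‖D x - D v‖ ≤ ‖D x₀‖ / 2 := fun x hx => by
      rw [← dist_eq_norm]
      exact (hDclose x (hsub hx) v hv ((abs_sub_left_of_mem_uIcc hx).trans_lt huv)).le
    have := (convex_uIcc v u).norm_image_sub_le_of_norm_hasDerivWithin_le hderiv hbound
      left_mem_uIcc right_mem_uIcc
    rwa [Real.norm_eq_abs, show γ u - u • D v - (γ v - v • D v) = γ u - γ v - (u - v) • D v by
      module] at this
  have hDv : ‖D x₀‖ ≤ ‖D v‖ := hmin hv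
  calc ‖D x₀‖ / 2 * |u - v| = |u - v| * ‖D x₀‖ - ‖D x₀‖ / 2 * |u - v| := by ring
    _ ≤ ‖(u - v) • D v‖ - ‖γ u - γ v - (u - v) • D v‖ := by
      rw [norm_smul, Real.norm_eq_abs]; gcongr
    _ ≤ ‖γ u - γ v‖ := by
      have := norm_sub_norm_le ((u - v) • D v) ((u - v) • D v - (γ u - γ v))
      rw [sub_sub_cancel, norm_sub_rev ((u - v) • D v)] at this
      linarith

lemma ContDiffOn.exists_abs_sub_le_mul_norm_sub (hab : a < b)
    (hγ : ContDiffOn ℝ 1 γ (Icc a b)) (hinj : InjOn γ (Icc a b))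
    (hγ' : ∀ u ∈ Icc a b, derivWithin γ (Icc a b) u ≠ 0) :
    ∃ K ≥ 0, ∀ u ∈ Icc a b, ∀ v ∈ Icc a b, |u - v| ≤ K * ‖γ u - γ v‖ := by
  obtain ⟨δ, hδ, c, hc, hnear⟩ := hγ.exists_pos_mul_abs_sub_le_norm_sub_of_abs_sub_lt hab hγ'
  obtain ⟨m, hm, hfar⟩ := isCompact_Icc.exists_pos_le_dist_of_le_dist hγ.continuousOn hinj hδ
  have hba : 0 ≤ b - a := sub_nonneg.2 hab.le
  refine ⟨c⁻¹ + (b - a) / m, by positivity, fun u hu v hv => ?_⟩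
  have hnear_le : 0 ≤ c⁻¹ * ‖γ u - γ v‖ := by positivity
  have hfar_le : 0 ≤ (b - a) / m * ‖γ u - γ v‖ := by positivity
  rcases lt_or_ge |u - v| δ with hlt | hge
  · have : |u - v| ≤ c⁻¹ * ‖γ u - γ v‖ := by
      rw [le_inv_mul_iff₀ hc]; exact hnear u hu v hv hlt
    linarith
  · have hm_le : m ≤ ‖γ u - γ v‖ := by
      simpa [dist_eq_norm] using hfar u hu v hv (by rwa [Real.dist_eq])
    have : |u - v| ≤ (b - a) / m * ‖γ u - γ v‖ :=
      calc |u - v| ≤ b - a := abs_sub_le_iff.2 ⟨by linarith [hu.2, hv.1], by linarith [hu.1, hv.2]⟩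
        _ = (b - a) / m * m := by field_simp
        _ ≤ (b - a) / m * ‖γ u - γ v‖ := by gcongr
    linarith

lemma norm_smul_sub_smul_le {x x' y y' : E} {s t L R : ℝ} (hs : 0 ≤ s) (hL : 0 ≤ L)
    (hy : ‖y - y'‖ ≤ L * ‖x - x'‖) (hx' : ‖x'‖ ≤ R) (hy' : ‖y'‖ ≤ R) :
    ‖s • y - t • y'‖ ≤ L * (‖s • x - t • x'‖ + |s - t| * R) + |s - t| * R := by
  have hsx : s * ‖x - x'‖ ≤ ‖s • x - t • x'‖ + |s - t| * R :=
    calc s * ‖x - x'‖ = ‖(s • x - t • x') + (t - s) • x'‖ := by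
          rw [← norm_smul_of_nonneg hs]; congr 1; module
      _ ≤ ‖s • x - t • x'‖ + |s - t| * R := by
        refine (norm_add_le _ _).trans (add_le_add_right ?_ _)
        rw [norm_smul, Real.norm_eq_abs, abs_sub_comm]; gcongr
  calc ‖s • y - t • y'‖ = ‖s • (y - y') + (s - t) • y'‖ := by congr 1; module
    _ ≤ s * ‖y - y'‖ + |s - t| * ‖y'‖ := by
      refine (norm_add_le _ _).trans_eq ?_
      rw [norm_smul_of_nonneg hs, norm_smul, Real.norm_eq_abs]
    _ ≤ L * (s * ‖x - x'‖) + |s - t| * R := by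
      rw [mul_left_comm]; gcongr
    _ ≤ L * (‖s • x - t • x'‖ + |s - t| * R) + |s - t| * R := by gcongr

end

@[simp] lemma mk4_apply_three (v : EuclideanSpace ℝ (Fin 3)) (s : ℝ) : mk4 v s 3 = s := by
  simp [mk4]

lemma mk4_sub (v w : EuclideanSpace ℝ (Fin 3)) (s t : ℝ) :
    mk4 v s - mk4 w t = mk4 (v - w) (s - t) := by
  ext i
  fin_cases i <;> simp [mk4]

lemma mk4_inj {v w : EuclideanSpace ℝ (Fin 3)} {s t : ℝ} : mk4 v s = mk4 w t ↔ v = w ∧ s = t := by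
  refine ⟨fun h => ⟨?_, by simpa using congrArg (· 3) h⟩, fun ⟨hv, hs⟩ => hv ▸ hs ▸ rfl⟩
  ext i
  have hi := congrArg (· (Fin.castSucc i)) h
  fin_cases i <;> simpa [mk4] using hi

lemma norm_mk4_sq (v : EuclideanSpace ℝ (Fin 3)) (s : ℝ) :
    ‖mk4 v s‖ ^ 2 = ‖v‖ ^ 2 + s ^ 2 := by
  simp [EuclideanSpace.norm_sq_eq, mk4, Fin.sum_univ_succ, add_assoc]

lemma norm_le_norm_mk4 (v : EuclideanSpace ℝ (Fin 3)) (s : ℝ) : ‖v‖ ≤ ‖mk4 v s‖ := by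
  rw [← sq_le_sq₀ (norm_nonneg _) (norm_nonneg _), norm_mk4_sq]
  exact le_add_of_nonneg_right (sq_nonneg s)

lemma abs_le_norm_mk4 (v : EuclideanSpace ℝ (Fin 3)) (s : ℝ) : |s| ≤ ‖mk4 v s‖ := by
  rw [← sq_le_sq₀ (abs_nonneg _) (norm_nonneg _), norm_mk4_sq, sq_abs]
  exact le_add_of_nonneg_left (sq_nonneg _)

lemma norm_mk4_le (v : EuclideanSpace ℝ (Fin 3)) (s : ℝ) : ‖mk4 v s‖ ≤ ‖v‖ + |s| := by
  rw [← sq_le_sq₀ (norm_nonneg _) (by positivity), norm_mk4_sq]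
  nlinarith [sq_abs s, norm_nonneg v, abs_nonneg s]

section

variable {γ γ₁ γ₂ : ℝ → EuclideanSpace ℝ (Fin 3)}

def coneParam (γ : ℝ → EuclideanSpace ℝ (Fin 3)) (p : ℝ × ℝ) : EuclideanSpace ℝ (Fin 4) :=
  mk4 (p.1 • γ p.2) p.1

lemma coneOver_eq_image (γ : ℝ → EuclideanSpace ℝ (Fin 3)) :
    ConeOver γ = coneParam γ '' (Icc 0 1 ×ˢ Icc 0 1) := by
  ext x
  constructor
  · rintro ⟨s, hs, u, hu, rfl⟩
    exact ⟨(s, u), ⟨hs, hu⟩, rfl⟩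
  · rintro ⟨⟨s, u⟩, ⟨hs, hu⟩, rfl⟩
    exact ⟨s, hs, u, hu, rfl⟩

lemma coneParam_eq_coneParam_iff {p q : ℝ × ℝ} :
    coneParam γ p = coneParam γ q ↔ p.1 = q.1 ∧ (p.1 = 0 ∨ γ p.2 = γ q.2) := by
  rw [coneParam, coneParam, mk4_inj]
  constructor
  · rintro ⟨hv, hs⟩
    rw [← hs] at hv
    exact ⟨hs, or_iff_not_imp_left.2 fun h0 => smul_right_injective _ h0 hv⟩
  · rintro ⟨hs, h0 | hγ⟩
    · simp [← hs, h0]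
    · simp [← hs, hγ]

lemma norm_coneParam_sub_le {δ : ℝ → EuclideanSpace ℝ (Fin 3)} {p q : ℝ × ℝ} {L R : ℝ}
    (hp : 0 ≤ p.1) (hL : 0 ≤ L) (hLip : ‖δ p.2 - δ q.2‖ ≤ L * ‖γ p.2 - γ q.2‖)
    (hγ : ‖γ q.2‖ ≤ R) (hδ : ‖δ q.2‖ ≤ R) :
    ‖coneParam δ p - coneParam δ q‖ ≤ (L + 1) * (R + 1) * ‖coneParam γ p - coneParam γ q‖ := by
  set N := ‖coneParam γ p - coneParam γ q‖
  have hR : 0 ≤ R := (norm_nonneg _).trans hγ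
  have hvec : ‖p.1 • γ p.2 - q.1 • γ q.2‖ ≤ N := by
    simpa only [N, coneParam, mk4_sub] using norm_le_norm_mk4 _ _
  have hst : |p.1 - q.1| ≤ N := by
    simpa only [N, coneParam, mk4_sub] using abs_le_norm_mk4 _ _
  calc ‖coneParam δ p - coneParam δ q‖ ≤ ‖p.1 • δ p.2 - q.1 • δ q.2‖ + |p.1 - q.1| := by
        simpa only [coneParam, mk4_sub] using norm_mk4_le _ _
    _ ≤ L * (‖p.1 • γ p.2 - q.1 • γ q.2‖ + |p.1 - q.1| * R) + |p.1 - q.1| * R + |p.1 - q.1| := by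
        gcongr; exact norm_smul_sub_smul_le hp hL hLip hγ hδ
    _ ≤ L * (N + N * R) + N * R + N := by gcongr
    _ = (L + 1) * (R + 1) * N := by ring

lemma exists_norm_coneParam_sub_le_mul (h₁ : IsC1Embedding γ₁)
    (h₂ : ContDiffOn ℝ 1 γ₂ (Icc 0 1)) :
    ∃ K ≥ 1, ∀ p ∈ Icc (0 : ℝ) 1 ×ˢ Icc (0 : ℝ) 1, ∀ q ∈ Icc (0 : ℝ) 1 ×ˢ Icc (0 : ℝ) 1,
      ‖coneParam γ₂ p - coneParam γ₂ q‖ ≤ K * ‖coneParam γ₁ p - coneParam γ₁ q‖ := by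
  obtain ⟨hγ₁, hinj₁, hγ₁'⟩ := h₁
  obtain ⟨K₁, hK₁, hanti⟩ := hγ₁.exists_abs_sub_le_mul_norm_sub one_pos hinj₁ hγ₁'
  obtain ⟨K₂, hlip⟩ := h₂.exists_lipschitzOnWith one_ne_zero (convex_Icc 0 1) isCompact_Icc
  obtain ⟨R₁, hR₁⟩ := isCompact_Icc.exists_bound_of_continuousOn hγ₁.continuousOn
  obtain ⟨R₂, hR₂⟩ := isCompact_Icc.exists_bound_of_continuousOn h₂.continuousOn
  set L : ℝ := K₂ * K₁
  set R := max R₁ R₂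
  have hL : 0 ≤ L := by positivity
  have hR : 0 ≤ R :=
    (norm_nonneg _).trans ((hR₁ 0 (left_mem_Icc.2 zero_le_one)).trans (le_max_left _ _))
  have hcurves : ∀ u ∈ Icc (0 : ℝ) 1, ∀ v ∈ Icc (0 : ℝ) 1,
      ‖γ₂ u - γ₂ v‖ ≤ L * ‖γ₁ u - γ₁ v‖ := fun u hu v hv =>
    calc ‖γ₂ u - γ₂ v‖ ≤ K₂ * |u - v| := by
          simpa only [Real.norm_eq_abs] using hlip.norm_sub_le hu hv
      _ ≤ K₂ * (K₁ * ‖γ₁ u - γ₁ v‖) := by gcongr; exact hanti u hu v hv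
      _ = L * ‖γ₁ u - γ₁ v‖ := by ring
  refine ⟨(L + 1) * (R + 1), one_le_mul_of_one_le_of_one_le (by linarith) (by linarith),
    fun p hp q hq => ?_⟩
  exact norm_coneParam_sub_le hp.1.1 hL (hcurves _ hp.2 _ hq.2)
    ((hR₁ _ hq.2).trans (le_max_left _ _)) ((hR₂ _ hq.2).trans (le_max_right _ _))

def coneMap (γ₁ γ₂ : ℝ → EuclideanSpace ℝ (Fin 3)) :
    EuclideanSpace ℝ (Fin 4) → EuclideanSpace ℝ (Fin 4) :=
  coneParam γ₂ ∘ Function.invFunOn (coneParam γ₁) (Icc 0 1 ×ˢ Icc 0 1)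

lemma coneMap_coneParam (h₁ : InjOn γ₁ (Icc 0 1)) {p : ℝ × ℝ} (hp : p ∈ Icc 0 1 ×ˢ Icc 0 1) :
    coneMap γ₁ γ₂ (coneParam γ₁ p) = coneParam γ₂ p := by
  have hex : ∃ q ∈ Icc (0 : ℝ) 1 ×ˢ Icc (0 : ℝ) 1, coneParam γ₁ q = coneParam γ₁ p := ⟨p, hp, rfl⟩
  obtain ⟨hs, hu⟩ := coneParam_eq_coneParam_iff.1 (Function.invFunOn_eq hex)
  have hq := Function.invFunOn_mem hex
  exact coneParam_eq_coneParam_iff.2 ⟨hs, hu.imp_right fun h => congrArg γ₂ (h₁ hq.2 hp.2 h)⟩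

lemma bijOn_coneMap (h₁ : InjOn γ₁ (Icc 0 1)) (h₂ : InjOn γ₂ (Icc 0 1)) :
    BijOn (coneMap γ₁ γ₂) (ConeOver γ₁) (ConeOver γ₂) := by
  rw [coneOver_eq_image, coneOver_eq_image]
  refine ⟨?_, ?_, ?_⟩
  · rintro _ ⟨p, hp, rfl⟩
    exact ⟨p, hp, (coneMap_coneParam h₁ hp).symm⟩
  · rintro _ ⟨p, hp, rfl⟩ _ ⟨q, hq, rfl⟩ h
    rw [coneMap_coneParam h₁ hp, coneMap_coneParam h₁ hq, coneParam_eq_coneParam_iff,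
      h₂.eq_iff hp.2 hq.2] at h
    rwa [coneParam_eq_coneParam_iff, h₁.eq_iff hp.2 hq.2]
  · rintro _ ⟨p, hp, rfl⟩
    exact ⟨_, ⟨p, hp, rfl⟩, coneMap_coneParam h₁ hp⟩

lemma coneMap_apply_three (h₁ : InjOn γ₁ (Icc 0 1)) {x : EuclideanSpace ℝ (Fin 4)}
    (hx : x ∈ ConeOver γ₁) : coneMap γ₁ γ₂ x 3 = x 3 := by
  rw [coneOver_eq_image] at hx
  obtain ⟨p, hp, rfl⟩ := hx
  rw [coneMap_coneParam h₁ hp, coneParam, coneParam, mk4_apply_three, mk4_apply_three]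

lemma image_coneMap_inter_slice (h₁ : InjOn γ₁ (Icc 0 1)) (h₂ : InjOn γ₂ (Icc 0 1)) (s : ℝ) :
    coneMap γ₁ γ₂ '' (ConeOver γ₁ ∩ {x | x 3 = s}) = ConeOver γ₂ ∩ {x | x 3 = s} := by
  have : ConeOver γ₁ ∩ {x | x 3 = s} = ConeOver γ₁ ∩ coneMap γ₁ γ₂ ⁻¹' {x | x 3 = s} :=
    Set.ext fun x => and_congr_right fun hx => by simp [coneMap_apply_three h₁ hx]
  rw [this, image_inter_preimage, (bijOn_coneMap h₁ h₂).image_eq]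

end

theorem cones_over_arcs_biLipschitz_general (γ₁ γ₂ : ℝ → EuclideanSpace ℝ (Fin 3))
    (h₁ : IsC1Embedding γ₁) (h₂ : IsC1Embedding γ₂) :
    ∃ lam : ℝ, 1 ≤ lam ∧
      ∃ Φ : EuclideanSpace ℝ (Fin 4) → EuclideanSpace ℝ (Fin 4),
        Set.BijOn Φ (ConeOver γ₁) (ConeOver γ₂) ∧
        (∀ p ∈ ConeOver γ₁, ∀ q ∈ ConeOver γ₁,
          lam⁻¹ * ‖p - q‖ ≤ ‖Φ p - Φ q‖ ∧ ‖Φ p - Φ q‖ ≤ lam * ‖p - q‖) ∧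
        (∀ s ∈ Set.Icc (0 : ℝ) 1,
          Φ '' (ConeOver γ₁ ∩ {p | p 3 = s}) = ConeOver γ₂ ∩ {p | p 3 = s}) ∧
        (∀ s ∈ Set.Icc (0 : ℝ) 1,
          Φ (mk4 (s • γ₁ 0) s) = mk4 (s • γ₂ 0) s ∧
          Φ (mk4 (s • γ₁ 1) s) = mk4 (s • γ₂ 1) s) := by
  obtain ⟨K₁₂, hK₁₂, hle₁₂⟩ := exists_norm_coneParam_sub_le_mul h₁ h₂.1
  obtain ⟨K₂₁, -, hle₂₁⟩ := exists_norm_coneParam_sub_le_mul h₂ h₁.1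
  have hinj₁ := h₁.2.1
  have hK : 0 < max K₁₂ K₂₁ := zero_lt_one.trans_le (le_max_of_le_left hK₁₂)
  refine ⟨max K₁₂ K₂₁, le_max_of_le_left hK₁₂, coneMap γ₁ γ₂, bijOn_coneMap hinj₁ h₂.2.1,
    ?_, fun s _ => image_coneMap_inter_slice hinj₁ h₂.2.1 s, fun s hs => ⟨?_, ?_⟩⟩
  · rw [coneOver_eq_image]
    rintro _ ⟨p, hp, rfl⟩ _ ⟨q, hq, rfl⟩
    rw [coneMap_coneParam hinj₁ hp, coneMap_coneParam hinj₁ hq, inv_mul_le_iff₀ hK]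
    exact ⟨(hle₂₁ p hp q hq).trans (by gcongr; exact le_max_right _ _),
      (hle₁₂ p hp q hq).trans (by gcongr; exact le_max_left _ _)⟩
  · exact coneMap_coneParam hinj₁ (p := (s, 0)) ⟨hs, left_mem_Icc.2 zero_le_one⟩
  · exact coneMap_coneParam hinj₁ (p := (s, 1)) ⟨hs, right_mem_Icc.2 zero_le_one⟩

/-- for `C¹` embeddings `γ₁, γ₂ : [0,1] → ℝ³` with the same endpoints,
the straight cones over them in `ℝ⁴` are bi-Lipschitz equivalent via a bijection `Φ`
preserving the last coordinate and fixing the two boundary rays. -/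
theorem cones_over_arcs_biLipschitz (γ₁ γ₂ : ℝ → EuclideanSpace ℝ (Fin 3))
    (h₁ : IsC1Embedding γ₁) (h₂ : IsC1Embedding γ₂)
    (he0 : γ₁ 0 = γ₂ 0) (he1 : γ₁ 1 = γ₂ 1) :
    ∃ lam : ℝ, 1 ≤ lam ∧
      ∃ Φ : EuclideanSpace ℝ (Fin 4) → EuclideanSpace ℝ (Fin 4),
        Set.BijOn Φ (ConeOver γ₁) (ConeOver γ₂) ∧
        (∀ p ∈ ConeOver γ₁, ∀ q ∈ ConeOver γ₁,
          lam⁻¹ * ‖p - q‖ ≤ ‖Φ p - Φ q‖ ∧ ‖Φ p - Φ q‖ ≤ lam * ‖p - q‖) ∧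
        (∀ s ∈ Set.Icc (0 : ℝ) 1,
          Φ '' (ConeOver γ₁ ∩ {p | p 3 = s}) = ConeOver γ₂ ∩ {p | p 3 = s}) ∧
        (∀ s ∈ Set.Icc (0 : ℝ) 1,
          Φ (mk4 (s • γ₁ 0) s) = mk4 (s • γ₂ 0) s ∧
          Φ (mk4 (s • γ₁ 1) s) = mk4 (s • γ₂ 1) s) :=
  cones_over_arcs_biLipschitz_general γ₁ γ₂ h₁ h₂
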